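/- arXiv:1508.01000 — 2 statements merged into one kernel-verified Lean document; each statement's English description precedes it below -/
import Mathlib

section
/- Let n, m, p ≥ 1; for j = 1, …, m let Q_j ∈ ℝⁿˣⁿ be symmetric positive semidefinite, and for i = 0, 1, …, p let a_{ij} ∈ {−1, 0, 1}, b_i ∈ ℝⁿ, c_i ∈ ℝ, g_i(x) = Σ_{j=1}^m a_{ij} xᵀQ_j x + 2 b_iᵀx + c_i, and let l_i ∈ ℝ ∪ {−∞}, u_i ∈ ℝ ∪ {+∞} with l_i ≤ u_i. Let K = { j ∈ {1, …, m} : a_{0j} = −1, or a_{ij} ≠ 0 for some i ∈ {1, …, p} }. Consider (QCQP): minimize g₀(x) over x ∈ ℝⁿ subject to l_i ≤ g_i(x) ≤ u_i for i = 1, …, p, and its relaxation (CR'): minimize Σ_{j∉K} a_{0j} xᵀQ_j x + Σ_{j∈K} a_{0j} t_j + 2 b₀ᵀx + c₀ over x ∈ ℝⁿ and (t_j)_{j∈K} subject to l_i ≤ Σ_{j∈K} a_{ij} t_j + 2 b_iᵀx + c_i ≤ u_i for i = 1, …, p and xᵀQ_j x ≤ t_j for each j ∈ K. Suppose that for every j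 ∈ K, the dimension of the span of span{b₁, …, b_p} ∪ N(Q_j) ∪ ⋃_{i ∈ {1,…,m}, i ≠ j} R(Q_i) is at most n − 1, and that the optimal value of (CR') is > −∞. Then x* is a global minimizer of (QCQP) if and only if (x*, (x*ᵀQ_j x*)_{j∈K}) is a global minimizer of (CR'). -/
/-!
Every feasible point `(x, t)` of (CR') is matched by a feasible point of (QCQP) with no larger
objective. By the dimension hypothesis, each `j ∈ K` has a direction `d` orthogonal to all `b_i`,
killed by every `Q_i` with `i ≠ j` and with `dᵀ Q_j d > 0`. Moving `x` along `d` leaves every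
linear term `b_iᵀ x` and every form `xᵀ Q_i x`, `i ≠ j`, unchanged, while `xᵀ Q_j x` runs through
all values above its current one; the sign of the step can be chosen so that `b₀ᵀ x` does not grow.
Doing this for each `j ∈ K` lifts `x` to `x'` with `x'ᵀ Q_j x' = t_j`, which is (QCQP)-feasible
since `a_{ij} = 0` for `j ∉ K`, and whose objective is at most that of `(x, t)`. As
`x ↦ (x, (xᵀ Q_j x)_j)` maps (QCQP) into (CR') preserving values, the minimizers correspond.
-/

open Matrix

noncomputable section

/-- The quadratic form `xᵀ M x`. -/
def qf {n : ℕ} (M : Matrix (Fin n) (Fin n) ℝ) (x : Fin n → ℝ) : ℝ := x ⬝ᵥ (M *ᵥ x)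

theorem exists_ne_zero_forall_dotProduct_eq_zero {K ι : Type*} [Field K] [Fintype ι]
    [DecidableEq ι] {W : Submodule K (ι → K)} (hW : Module.finrank K W < Fintype.card ι) :
    ∃ d ≠ 0, ∀ w ∈ W, d ⬝ᵥ w = 0 := by
  obtain ⟨f, hf, hWf⟩ := Submodule.exists_dual_map_eq_bot_of_lt_top
    (Submodule.lt_top_of_finrank_lt_finrank (s := W) (by rwa [Module.finrank_fintype_fun_eq_card]))
    inferInstance
  refine ⟨(dotProductEquiv K ι).symm f, by simpa using hf, fun w hw => ?_⟩
  have : f w ∈ W.map f := Submodule.mem_map_of_mem hw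
  rw [hWf, Submodule.mem_bot] at this
  simpa [← dotProductEquiv_apply_apply] using this

theorem qf_smul {n : ℕ} (M : Matrix (Fin n) (Fin n) ℝ) (s : ℝ) (x : Fin n → ℝ) :
    qf M (s • x) = s ^ 2 * qf M x := by
  simp only [qf, mulVec_smul, dotProduct_smul, smul_dotProduct, smul_eq_mul]
  ring

theorem exists_nonneg_mul_sq_add_eq {q : ℝ} (hq : 0 < q) (r : ℝ) {δ : ℝ} (hδ : 0 ≤ δ) :
    ∃ s, 0 ≤ s ∧ q * s ^ 2 + 2 * r * s = δ := by
  have hD : √(r ^ 2 + q * δ) ^ 2 = r ^ 2 + q * δ := Real.sq_sqrt (by positivity)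
  have hrD : r ≤ √(r ^ 2 + q * δ) := Real.le_sqrt_of_sq_le (by nlinarith)
  refine ⟨(-r + √(r ^ 2 + q * δ)) / q, div_nonneg (by linarith) hq.le, ?_⟩
  field_simp
  nlinarith

namespace Matrix.IsHermitian

theorem dotProduct_mulVec_comm {ι : Type*} [Fintype ι] {M : Matrix ι ι ℝ} (hM : M.IsHermitian)
    (x y : ι → ℝ) : x ⬝ᵥ M *ᵥ y = y ⬝ᵥ M *ᵥ x := by
  rw [dotProduct_mulVec, ← mulVec_transpose, ← conjTranspose_eq_transpose_of_trivial, hM,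
    dotProduct_comm]

theorem mulVec_eq_zero_of_forall_dotProduct_range_eq_zero {ι : Type*} [Fintype ι]
    {M : Matrix ι ι ℝ} (hM : M.IsHermitian) {d : ι → ℝ}
    (hd : ∀ w ∈ LinearMap.range M.mulVecLin, d ⬝ᵥ w = 0) : M *ᵥ d = 0 := by
  have := hd _ ⟨M *ᵥ d, rfl⟩
  rw [mulVecLin_apply, hM.dotProduct_mulVec_comm] at this
  exact dotProduct_self_eq_zero.1 this

variable {n : ℕ} {M : Matrix (Fin n) (Fin n) ℝ}

theorem qf_add (hM : M.IsHermitian) (x y : Fin n → ℝ) :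
    qf M (x + y) = qf M x + 2 * (y ⬝ᵥ M *ᵥ x) + qf M y := by
  simp only [qf, mulVec_add, dotProduct_add, add_dotProduct, hM.dotProduct_mulVec_comm x y]
  ring

theorem qf_add_of_mulVec_eq_zero (hM : M.IsHermitian) (x : Fin n → ℝ) {y : Fin n → ℝ}
    (hy : M *ᵥ y = 0) : qf M (x + y) = qf M x := by
  rw [hM.qf_add, hM.dotProduct_mulVec_comm, qf, qf, hy, dotProduct_zero, dotProduct_zero]
  ring

theorem exists_qf_add_smul_eq (hM : M.IsHermitian) {d : Fin n → ℝ} (hd : 0 < qf M d)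
    {x : Fin n → ℝ} {τ : ℝ} (hτ : qf M x ≤ τ) (β : ℝ) :
    ∃ s : ℝ, qf M (x + s • d) = τ ∧ s * β ≤ 0 := by
  simp only [hM.qf_add, qf_smul, smul_dotProduct, smul_eq_mul]
  rcases le_total β 0 with hβ | hβ
  · obtain ⟨s, hs, hroot⟩ := exists_nonneg_mul_sq_add_eq hd (d ⬝ᵥ M *ᵥ x) (sub_nonneg.2 hτ)
    exact ⟨s, by linarith, mul_nonpos_of_nonneg_of_nonpos hs hβ⟩
  · obtain ⟨s, hs, hroot⟩ := exists_nonneg_mul_sq_add_eq hd (-(d ⬝ᵥ M *ᵥ x)) (sub_nonneg.2 hτ)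
    exact ⟨-s, by linarith, by nlinarith⟩

end Matrix.IsHermitian

theorem exists_dotProduct_eq_zero_mulVec_eq_zero_qf_pos {κ μ : Type*} {n : ℕ}
    (Q : μ → Matrix (Fin n) (Fin n) ℝ) (hQ : ∀ i, (Q i).PosSemidef) (b : κ → Fin n → ℝ) (j : μ)
    (hdim : Module.finrank ℝ
        ↥(Submodule.span ℝ (Set.range b) ⊔ LinearMap.ker (Q j).mulVecLin ⊔
            ⨆ i : μ, ⨆ _ : i ≠ j, LinearMap.range (Q i).mulVecLin) < n) :
    ∃ d : Fin n → ℝ, (∀ i, b i ⬝ᵥ d = 0) ∧ (∀ i ≠ j, Q i *ᵥ d = 0) ∧ 0 < qf (Q j) d := by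
  obtain ⟨d, hd0, hd⟩ := exists_ne_zero_forall_dotProduct_eq_zero
    (by rwa [Fintype.card_fin])
  refine ⟨d, fun i => ?_, fun i hi => ?_, ?_⟩
  · rw [dotProduct_comm]
    exact hd _ (Submodule.mem_sup_left (Submodule.mem_sup_left
      (Submodule.subset_span (Set.mem_range_self i))))
  · refine (hQ i).1.mulVec_eq_zero_of_forall_dotProduct_range_eq_zero fun w hw => hd w ?_
    exact Submodule.mem_sup_right (Submodule.mem_iSup_of_mem i (Submodule.mem_iSup_of_mem hi hw))
  · refine lt_of_le_of_ne (by simpa [qf] using (hQ j).dotProduct_mulVec_nonneg d) fun h => hd0 ?_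
    have hker : Q j *ᵥ d = 0 := ((hQ j).dotProduct_mulVec_zero_iff d).1 (by simpa [qf] using h.symm)
    exact dotProduct_self_eq_zero.1
      (hd d (Submodule.mem_sup_left (Submodule.mem_sup_right (by simpa using hker))))

theorem exists_qf_eq_of_qf_le {κ : Type*} {n m : ℕ} (Q : Fin m → Matrix (Fin n) (Fin n) ℝ)
    (hQ : ∀ j, (Q j).IsHermitian) (b : κ → Fin n → ℝ) (b0 : Fin n → ℝ) (K : Finset (Fin m))
    (hdir : ∀ j ∈ K, ∃ d : Fin n → ℝ,
      (∀ i, b i ⬝ᵥ d = 0) ∧ (∀ i ≠ j, Q i *ᵥ d = 0) ∧ 0 < qf (Q j) d)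
    (x : Fin n → ℝ) (t : Fin m → ℝ) (ht : ∀ j ∈ K, qf (Q j) x ≤ t j) :
    ∃ x' : Fin n → ℝ, (∀ j ∈ K, qf (Q j) x' = t j) ∧ (∀ j ∉ K, qf (Q j) x' = qf (Q j) x) ∧
      (∀ i, b i ⬝ᵥ x' = b i ⬝ᵥ x) ∧ b0 ⬝ᵥ x' ≤ b0 ⬝ᵥ x := by
  induction K using Finset.induction_on generalizing x with
  | empty => exact ⟨x, by simp, fun _ _ => rfl, fun _ => rfl, le_rfl⟩
  | insert j K hjK ih =>
    obtain ⟨x₁, hK, hKc, hb, hb0⟩ :=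
      ih (fun k hk => hdir k (Finset.mem_insert_of_mem hk)) x
        (fun k hk => ht k (Finset.mem_insert_of_mem hk))
    obtain ⟨d, hdb, hdQ, hdj⟩ := hdir j (Finset.mem_insert_self j K)
    obtain ⟨s, hsj, hsb0⟩ := (hQ j).exists_qf_add_smul_eq hdj
      ((hKc j hjK).trans_le (ht j (Finset.mem_insert_self j K))) (b0 ⬝ᵥ d)
    have hother : ∀ k ≠ j, qf (Q k) (x₁ + s • d) = qf (Q k) x₁ := fun k hk =>
      (hQ k).qf_add_of_mulVec_eq_zero x₁ (by rw [mulVec_smul, hdQ k hk, smul_zero])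
    refine ⟨x₁ + s • d, fun k hk => ?_, fun k hk => ?_, fun i => ?_, ?_⟩
    · rcases Finset.mem_insert.1 hk with rfl | hk
      · exact hsj
      · rw [hother k (ne_of_mem_of_not_mem hk hjK), hK k hk]
    · rw [Finset.mem_insert, not_or] at hk
      rw [hother k hk.1, hKc k hk.2]
    · rw [dotProduct_add, dotProduct_smul, hdb, smul_zero, add_zero, hb]
    · rw [dotProduct_add, dotProduct_smul, smul_eq_mul]
      linarith

/- `Bx` and `gx` stand for `B x (τ x)` and `g x (τ x)`; keeping them separate lets `apply` solve
for `B` and `g` by unification. -/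
theorem isMinimizer_iff_of_relaxation {X T R : Type*} [Preorder R] {A : X → Prop}
    {B : X → T → Prop} {f : X → R} {g : X → T → R} (τ : X → T)
    (hB : ∀ x, B x (τ x) ↔ A x) (hg : ∀ x, g x (τ x) = f x)
    (hdom : ∀ x t, B x t → ∃ x', A x' ∧ f x' ≤ g x t) (x : X) {Bx : Prop} {gx : R}
    (hBx : B x (τ x) = Bx := by rfl) (hgx : g x (τ x) = gx := by rfl) :
    (A x ∧ ∀ x', A x' → f x ≤ f x') ↔ (Bx ∧ ∀ x' t, B x' t → gx ≤ g x' t) := by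
  subst hBx hgx
  rw [hB, hg]
  refine and_congr_right fun _ => ⟨fun hmin x' t hx't => ?_, fun hmin x' hx' => ?_⟩
  · obtain ⟨x'', hx'', hle⟩ := hdom x' t hx't
    exact (hmin x'' hx'').trans hle
  · simpa only [hg] using hmin x' (τ x') ((hB x').2 hx')

theorem stmt8_general (n m p : ℕ) (hn : 1 ≤ n)
    (Q : Fin m → Matrix (Fin n) (Fin n) ℝ) (hQ : ∀ j, (Q j).PosSemidef)
    (a0 : Fin m → ℝ) (a : Fin p → Fin m → ℝ)
    (b0 : Fin n → ℝ) (b : Fin p → Fin n → ℝ) (c0 : ℝ) (c : Fin p → ℝ)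
    (l u : Fin p → EReal)
    (K : Finset (Fin m))
    (hK : ∀ j, j ∈ K ↔ (a0 j = -1 ∨ ∃ i, a i j ≠ 0))
    (hdim : ∀ j ∈ K,
      Module.finrank ℝ
        ↥(Submodule.span ℝ (Set.range b) ⊔ LinearMap.ker (Q j).mulVecLin ⊔
            ⨆ i : Fin m, ⨆ _ : i ≠ j, LinearMap.range (Q i).mulVecLin) ≤ n - 1)
    (xs : Fin n → ℝ) :
    -- `xs` globally solves (QCQP)
    ((∀ i, l i ≤ (((∑ j, a i j * qf (Q j) xs) + 2 * (b i ⬝ᵥ xs) + c i : ℝ) : EReal) ∧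
        (((∑ j, a i j * qf (Q j) xs) + 2 * (b i ⬝ᵥ xs) + c i : ℝ) : EReal) ≤ u i) ∧
      (∀ x : Fin n → ℝ,
        (∀ i, l i ≤ (((∑ j, a i j * qf (Q j) x) + 2 * (b i ⬝ᵥ x) + c i : ℝ) : EReal) ∧
            (((∑ j, a i j * qf (Q j) x) + 2 * (b i ⬝ᵥ x) + c i : ℝ) : EReal) ≤ u i) →
        (∑ j, a0 j * qf (Q j) xs) + 2 * (b0 ⬝ᵥ xs) + c0 ≤
          (∑ j, a0 j * qf (Q j) x) + 2 * (b0 ⬝ᵥ x) + c0)) ↔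
    -- `(xs, (xsᵀ Q_j xs)_j)` globally solves (CR')
    (((∀ i, l i ≤ (((∑ j ∈ K, a i j * qf (Q j) xs) + 2 * (b i ⬝ᵥ xs) + c i : ℝ) : EReal) ∧
          (((∑ j ∈ K, a i j * qf (Q j) xs) + 2 * (b i ⬝ᵥ xs) + c i : ℝ) : EReal) ≤ u i) ∧
        (∀ j ∈ K, qf (Q j) xs ≤ qf (Q j) xs)) ∧
      (∀ (x : Fin n → ℝ) (t : Fin m → ℝ),
        ((∀ i, l i ≤ (((∑ j ∈ K, a i j * t j) + 2 * (b i ⬝ᵥ x) + c i : ℝ) : EReal) ∧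
            (((∑ j ∈ K, a i j * t j) + 2 * (b i ⬝ᵥ x) + c i : ℝ) : EReal) ≤ u i) ∧
          (∀ j ∈ K, qf (Q j) x ≤ t j)) →
        (∑ j ∈ Kᶜ, a0 j * qf (Q j) xs) + (∑ j ∈ K, a0 j * qf (Q j) xs)
            + 2 * (b0 ⬝ᵥ xs) + c0 ≤
          (∑ j ∈ Kᶜ, a0 j * qf (Q j) x) + (∑ j ∈ K, a0 j * t j)
            + 2 * (b0 ⬝ᵥ x) + c0)) := by
  have ha : ∀ i, ∀ j ∉ K, a i j = 0 := fun i j hj =>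
    by_contra fun h => hj ((hK j).2 (Or.inr ⟨i, h⟩))
  have hsum_K : ∀ i x, ∑ j ∈ K, a i j * qf (Q j) x = ∑ j, a i j * qf (Q j) x := fun i x =>
    Finset.sum_subset K.subset_univ fun j _ hj => by rw [ha i j hj, zero_mul]
  apply isMinimizer_iff_of_relaxation (fun x j => qf (Q j) x) ?_ ?_ ?_ xs
  · simp only [hsum_K, le_refl, implies_true, and_true]
  · simp only [Finset.sum_compl_add_sum, implies_true]
  rintro x t ⟨hfeas, ht⟩
  obtain ⟨x', hK', hKc, hb, hb0⟩ := exists_qf_eq_of_qf_le Q (fun j => (hQ j).1) b b0 K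
    (fun j hj => exists_dotProduct_eq_zero_mulVec_eq_zero_qf_pos Q hQ b j
      (by have := hdim j hj; omega)) x t ht
  have hsum : ∀ w : Fin m → ℝ, ∑ j, w j * qf (Q j) x' =
      ∑ j ∈ Kᶜ, w j * qf (Q j) x + ∑ j ∈ K, w j * t j := fun w => by
    rw [← Finset.sum_compl_add_sum K]
    congr 1 <;> refine Finset.sum_congr rfl fun j hj => ?_
    · rw [hKc j (Finset.mem_compl.1 hj)]
    · rw [hK' j hj]
  refine ⟨x', fun i => ?_, ?_⟩
  · rw [hsum, hb, Finset.sum_eq_zero fun j hj => by rw [ha i j (Finset.mem_compl.1 hj), zero_mul],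
      zero_add]
    exact hfeas i
  · simp only [hsum]
    linarith

/-- equivalence of the two-sided QCQP and its convex relaxation (CR'). -/
theorem stmt8 (n m p : ℕ) (hn : 1 ≤ n) (hm : 1 ≤ m) (hp : 1 ≤ p)
    (Q : Fin m → Matrix (Fin n) (Fin n) ℝ) (hQ : ∀ j, (Q j).PosSemidef)
    (a0 : Fin m → ℝ) (a : Fin p → Fin m → ℝ)
    (ha0 : ∀ j, a0 j = -1 ∨ a0 j = 0 ∨ a0 j = 1)
    (ha : ∀ i j, a i j = -1 ∨ a i j = 0 ∨ a i j = 1)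
    (b0 : Fin n → ℝ) (b : Fin p → Fin n → ℝ) (c0 : ℝ) (c : Fin p → ℝ)
    (l u : Fin p → EReal)
    (hl : ∀ i, l i ≠ ⊤) (hu : ∀ i, u i ≠ ⊥) (hlu : ∀ i, l i ≤ u i)
    (K : Finset (Fin m))
    (hK : ∀ j, j ∈ K ↔ (a0 j = -1 ∨ ∃ i, a i j ≠ 0))
    (hdim : ∀ j ∈ K,
      Module.finrank ℝ
        ↥(Submodule.span ℝ (Set.range b) ⊔ LinearMap.ker (Q j).mulVecLin ⊔
            ⨆ i : Fin m, ⨆ _ : i ≠ j, LinearMap.range (Q i).mulVecLin) ≤ n - 1)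
    (hCR : sInf ((fun q : (Fin n → ℝ) × (Fin m → ℝ) =>
        (((∑ j ∈ Kᶜ, a0 j * qf (Q j) q.1) + (∑ j ∈ K, a0 j * q.2 j)
            + 2 * (b0 ⬝ᵥ q.1) + c0 : ℝ) : EReal)) ''
      {q | (∀ i, l i ≤ (((∑ j ∈ K, a i j * q.2 j) + 2 * (b i ⬝ᵥ q.1) + c i : ℝ) : EReal) ∧
              (((∑ j ∈ K, a i j * q.2 j) + 2 * (b i ⬝ᵥ q.1) + c i : ℝ) : EReal) ≤ u i) ∧
           (∀ j ∈ K, qf (Q j) q.1 ≤ q.2 j)}) ≠ ⊥)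
    (xs : Fin n → ℝ) :
    -- `xs` globally solves (QCQP)
    ((∀ i, l i ≤ (((∑ j, a i j * qf (Q j) xs) + 2 * (b i ⬝ᵥ xs) + c i : ℝ) : EReal) ∧
        (((∑ j, a i j * qf (Q j) xs) + 2 * (b i ⬝ᵥ xs) + c i : ℝ) : EReal) ≤ u i) ∧
      (∀ x : Fin n → ℝ,
        (∀ i, l i ≤ (((∑ j, a i j * qf (Q j) x) + 2 * (b i ⬝ᵥ x) + c i : ℝ) : EReal) ∧
            (((∑ j, a i j * qf (Q j) x) + 2 * (b i ⬝ᵥ x) + c i : ℝ) : EReal) ≤ u i) →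
        (∑ j, a0 j * qf (Q j) xs) + 2 * (b0 ⬝ᵥ xs) + c0 ≤
          (∑ j, a0 j * qf (Q j) x) + 2 * (b0 ⬝ᵥ x) + c0)) ↔
    -- `(xs, (xsᵀ Q_j xs)_j)` globally solves (CR')
    (((∀ i, l i ≤ (((∑ j ∈ K, a i j * qf (Q j) xs) + 2 * (b i ⬝ᵥ xs) + c i : ℝ) : EReal) ∧
          (((∑ j ∈ K, a i j * qf (Q j) xs) + 2 * (b i ⬝ᵥ xs) + c i : ℝ) : EReal) ≤ u i) ∧
        (∀ j ∈ K, qf (Q j) xs ≤ qf (Q j) xs)) ∧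
      (∀ (x : Fin n → ℝ) (t : Fin m → ℝ),
        ((∀ i, l i ≤ (((∑ j ∈ K, a i j * t j) + 2 * (b i ⬝ᵥ x) + c i : ℝ) : EReal) ∧
            (((∑ j ∈ K, a i j * t j) + 2 * (b i ⬝ᵥ x) + c i : ℝ) : EReal) ≤ u i) ∧
          (∀ j ∈ K, qf (Q j) x ≤ t j)) →
        (∑ j ∈ Kᶜ, a0 j * qf (Q j) xs) + (∑ j ∈ K, a0 j * qf (Q j) xs)
            + 2 * (b0 ⬝ᵥ xs) + c0 ≤
          (∑ j ∈ Kᶜ, a0 j * qf (Q j) x) + (∑ j ∈ K, a0 j * t j)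
            + 2 * (b0 ⬝ᵥ x) + c0)) :=
  stmt8_general n m p hn Q hQ a0 a b0 b c0 c l u K hK hdim xs
end
end

section
/- Let A ∈ ℝⁿˣⁿ be symmetric, b ∈ ℝⁿ, and α, β ∈ ℝ with α < β. Consider the two-sided trust region subproblem (TTRS): minimize (1/2) xᵀA x + bᵀx over x ∈ ℝⁿ subject to α ≤ xᵀx ≤ β, and its convex relaxation (CTTRS): minimize (1/2) xᵀ(A − λ_min(A) I_n) x + bᵀx + (λ_min(A)/2) t over (x, t) ∈ ℝⁿ × ℝ subject to α ≤ t ≤ β and xᵀx ≤ t. Then x* is a global minimizer of (TTRS) if and only if (x*, x*ᵀx*) is a global minimizer of (CTTRS). -/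
/-!
The relaxed objective at `(x, t)` equals `q(x) + λ/2 (t - xᵀx)`, where `q(x) = ½ xᵀAx + bᵀx`
and `λ = λ_min(A)`, so on the lifted points `(x, xᵀx)` the two problems agree. Conversely, a
feasible `(x, t)` of the relaxation is dominated by a feasible point of the original problem:
move `x` along a unit eigenvector `v` for `λ`, in the direction in which `bᵀv` does not
increase, until `yᵀy = t`; on this line `q` grows by exactly `λ/2 (t - xᵀx)` plus the
nonpositive linear term.
-/

open Matrix

theorem exists_mul_nonpos_and_sq_add_two_mul_eq (p c : ℝ) {d : ℝ} (hd : 0 ≤ d) :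
    ∃ s : ℝ, s * c ≤ 0 ∧ s ^ 2 + 2 * s * p = d := by
  have hroot : Real.sqrt (p ^ 2 + d) ^ 2 = p ^ 2 + d := Real.sq_sqrt (by positivity)
  have hp : |p| ≤ Real.sqrt (p ^ 2 + d) := by
    rw [← Real.sqrt_sq_eq_abs]
    exact Real.sqrt_le_sqrt (by linarith)
  rcases le_total c 0 with hc | hc
  · refine ⟨-p + Real.sqrt (p ^ 2 + d), mul_nonpos_of_nonneg_of_nonpos ?_ hc, by nlinarith⟩
    linarith [le_abs_self p]
  · refine ⟨-p - Real.sqrt (p ^ 2 + d), mul_nonpos_of_nonpos_of_nonneg ?_ hc, by nlinarith⟩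
    linarith [neg_le_abs p]

namespace Matrix

section Spectrum

open scoped MatrixOrder ComplexOrder

variable {𝕜 n : Type*} [RCLike 𝕜] [Fintype n] [DecidableEq n]

theorem IsHermitian.posSemidef_sub_algebraMap_iff {A : Matrix n n 𝕜} (hA : A.IsHermitian)
    (c : ℝ) :
    (A - algebraMap ℝ (Matrix n n 𝕜) c).PosSemidef ↔ c ∈ lowerBounds (spectrum ℝ A) := by
  rw [← le_iff, algebraMap_le_iff_le_spectrum (ha := hA.isSelfAdjoint)]
  rfl

theorem IsHermitian.mem_spectrum_of_isGreatest {A : Matrix n n 𝕜} (hA : A.IsHermitian)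
    {c : ℝ} (hc : IsGreatest {c : ℝ | (A - algebraMap ℝ (Matrix n n 𝕜) c).PosSemidef} c) :
    c ∈ spectrum ℝ A := by
  have hglb : IsGLB (spectrum ℝ A) c := by
    simpa only [IsGLB, hA.posSemidef_sub_algebraMap_iff, Set.ofPred_mem_eq] using hc
  exact hglb.mem_of_isClosed hglb.nonempty finite_real_spectrum.isClosed

theorem IsHermitian.exists_unit_eigenvector_of_mem_spectrum {A : Matrix n n 𝕜}
    (hA : A.IsHermitian) {c : ℝ} (hc : c ∈ spectrum ℝ A) :
    ∃ v : n → 𝕜, star v ⬝ᵥ v = 1 ∧ A *ᵥ v = c • v := by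
  obtain ⟨i, rfl⟩ : c ∈ Set.range hA.eigenvalues := hA.spectrum_real_eq_range_eigenvalues ▸ hc
  refine ⟨hA.eigenvectorBasis i, ?_, hA.mulVec_eigenvectorBasis i⟩
  rw [dotProduct_comm, ← EuclideanSpace.inner_eq_star_dotProduct]
  simp [hA.eigenvectorBasis.orthonormal.1 i]

end Spectrum

section Line

variable {n : Type*} [Fintype n]

theorem dotProduct_add_smul_self (x v : n → ℝ) (s : ℝ) :
    (x + s • v) ⬝ᵥ (x + s • v) = x ⬝ᵥ x + 2 * s * (x ⬝ᵥ v) + s ^ 2 * (v ⬝ᵥ v) := by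
  simp only [add_dotProduct, dotProduct_add, smul_dotProduct, dotProduct_smul, smul_eq_mul,
    dotProduct_comm v x]
  ring

theorem IsSymm.dotProduct_mulVec_add_smul {A : Matrix n n ℝ} (hA : A.IsSymm) {v : n → ℝ}
    {c : ℝ} (hAv : A *ᵥ v = c • v) (x : n → ℝ) (s : ℝ) :
    (x + s • v) ⬝ᵥ (A *ᵥ (x + s • v)) =
      x ⬝ᵥ (A *ᵥ x) + c * (2 * s * (x ⬝ᵥ v) + s ^ 2 * (v ⬝ᵥ v)) := by
  have hvAx : v ⬝ᵥ (A *ᵥ x) = c * (x ⬝ᵥ v) := by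
    rw [dotProduct_mulVec, ← mulVec_transpose, hA.eq, hAv, smul_dotProduct, smul_eq_mul,
      dotProduct_comm]
  simp only [mulVec_add, mulVec_smul, hAv, add_dotProduct, dotProduct_add, smul_dotProduct,
    dotProduct_smul, smul_eq_mul, hvAx]
  ring

theorem IsSymm.exists_dotProduct_self_eq_le {A : Matrix n n ℝ} (hA : A.IsSymm) {v : n → ℝ}
    (hv : v ⬝ᵥ v = 1) {c : ℝ} (hAv : A *ᵥ v = c • v) (b x : n → ℝ) {t : ℝ}
    (hxt : x ⬝ᵥ x ≤ t) :
    ∃ y : n → ℝ, y ⬝ᵥ y = t ∧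
      (1 / 2) * (y ⬝ᵥ (A *ᵥ y)) + b ⬝ᵥ y ≤
        (1 / 2) * (x ⬝ᵥ (A *ᵥ x)) + b ⬝ᵥ x + (c / 2) * (t - x ⬝ᵥ x) := by
  obtain ⟨s, hsb, hs⟩ :=
    exists_mul_nonpos_and_sq_add_two_mul_eq (x ⬝ᵥ v) (b ⬝ᵥ v) (sub_nonneg.mpr hxt)
  refine ⟨x + s • v, ?_, ?_⟩
  · rw [dotProduct_add_smul_self, hv]
    linarith
  · rw [hA.dotProduct_mulVec_add_smul hAv, hv, dotProduct_add, dotProduct_smul, smul_eq_mul,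
      ← hs]
    linarith

end Line

end Matrix

theorem stmt11_general (n : ℕ) (A : Matrix (Fin n) (Fin n) ℝ) (hA : A.IsSymm)
    (b : Fin n → ℝ) (α β : ℝ) (lmin : ℝ)
    (hlmin : IsGreatest {c : ℝ | (A - c • (1 : Matrix (Fin n) (Fin n) ℝ)).PosSemidef} lmin)
    (xs : Fin n → ℝ) :
    -- `xs` globally solves (TTRS)
    ((α ≤ xs ⬝ᵥ xs ∧ xs ⬝ᵥ xs ≤ β) ∧
      (∀ x : Fin n → ℝ, (α ≤ x ⬝ᵥ x ∧ x ⬝ᵥ x ≤ β) →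
        (1 / 2) * (xs ⬝ᵥ (A *ᵥ xs)) + b ⬝ᵥ xs ≤ (1 / 2) * (x ⬝ᵥ (A *ᵥ x)) + b ⬝ᵥ x)) ↔
    -- `(xs, xsᵀxs)` globally solves (CTTRS)
    (((α ≤ xs ⬝ᵥ xs ∧ xs ⬝ᵥ xs ≤ β) ∧ xs ⬝ᵥ xs ≤ xs ⬝ᵥ xs) ∧
      (∀ (x : Fin n → ℝ) (t : ℝ), ((α ≤ t ∧ t ≤ β) ∧ x ⬝ᵥ x ≤ t) →
        (1 / 2) * (xs ⬝ᵥ ((A - lmin • (1 : Matrix (Fin n) (Fin n) ℝ)) *ᵥ xs)) + b ⬝ᵥ xs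
            + (lmin / 2) * (xs ⬝ᵥ xs) ≤
          (1 / 2) * (x ⬝ᵥ ((A - lmin • (1 : Matrix (Fin n) (Fin n) ℝ)) *ᵥ x)) + b ⬝ᵥ x
            + (lmin / 2) * t)) := by
  have hrelax : ∀ (x : Fin n → ℝ) (t : ℝ),
      (1 / 2) * (x ⬝ᵥ ((A - lmin • (1 : Matrix (Fin n) (Fin n) ℝ)) *ᵥ x)) + b ⬝ᵥ x
          + (lmin / 2) * t =
        (1 / 2) * (x ⬝ᵥ (A *ᵥ x)) + b ⬝ᵥ x + (lmin / 2) * (t - x ⬝ᵥ x) := by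
    intro x t
    rw [sub_mulVec, smul_mulVec, one_mulVec, dotProduct_sub, dotProduct_smul, smul_eq_mul]
    ring
  simp only [hrelax, sub_self, mul_zero, add_zero, le_refl, and_true]
  refine ⟨fun ⟨hfeas, hmin⟩ => ⟨hfeas, fun x t ⟨ht, hxt⟩ => ?_⟩,
    fun ⟨hfeas, hmin⟩ => ⟨hfeas, fun x hx => by simpa using hmin x _ ⟨hx, le_rfl⟩⟩⟩
  have hAh : A.IsHermitian := isHermitian_iff_isSymm.mpr hA
  have hlmin_spec : lmin ∈ spectrum ℝ A :=
    hAh.mem_spectrum_of_isGreatest (by simpa only [Algebra.algebraMap_eq_smul_one] using hlmin)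
  obtain ⟨v, hv, hAv⟩ := hAh.exists_unit_eigenvector_of_mem_spectrum hlmin_spec
  obtain ⟨y, rfl, hy⟩ := hA.exists_dotProduct_self_eq_le (by simpa using hv) hAv b x hxt
  exact (hmin y ht).trans hy

/-- equivalence of global minimizers of the two-sided trust region
subproblem (TTRS) and its convex relaxation (CTTRS). `lmin` is the smallest eigenvalue
of `A`, characterized as the greatest `c` with `A - c I ⪰ 0`. -/
theorem stmt11 (n : ℕ) (A : Matrix (Fin n) (Fin n) ℝ) (hA : A.IsSymm)
    (b : Fin n → ℝ) (α β : ℝ) (hαβ : α < β) (lmin : ℝ)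
    (hlmin : IsGreatest {c : ℝ | (A - c • (1 : Matrix (Fin n) (Fin n) ℝ)).PosSemidef} lmin)
    (xs : Fin n → ℝ) :
    -- `xs` globally solves (TTRS)
    ((α ≤ xs ⬝ᵥ xs ∧ xs ⬝ᵥ xs ≤ β) ∧
      (∀ x : Fin n → ℝ, (α ≤ x ⬝ᵥ x ∧ x ⬝ᵥ x ≤ β) →
        (1 / 2) * (xs ⬝ᵥ (A *ᵥ xs)) + b ⬝ᵥ xs ≤ (1 / 2) * (x ⬝ᵥ (A *ᵥ x)) + b ⬝ᵥ x)) ↔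
    -- `(xs, xsᵀxs)` globally solves (CTTRS)
    (((α ≤ xs ⬝ᵥ xs ∧ xs ⬝ᵥ xs ≤ β) ∧ xs ⬝ᵥ xs ≤ xs ⬝ᵥ xs) ∧
      (∀ (x : Fin n → ℝ) (t : ℝ), ((α ≤ t ∧ t ≤ β) ∧ x ⬝ᵥ x ≤ t) →
        (1 / 2) * (xs ⬝ᵥ ((A - lmin • (1 : Matrix (Fin n) (Fin n) ℝ)) *ᵥ xs)) + b ⬝ᵥ xs
            + (lmin / 2) * (xs ⬝ᵥ xs) ≤
          (1 / 2) * (x ⬝ᵥ ((A - lmin • (1 : Matrix (Fin n) (Fin n) ℝ)) *ᵥ x)) + b ⬝ᵥ x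
            + (lmin / 2) * t)) :=
  stmt11_general n A hA b α β lmin hlmin xs
end
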